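/- Theorem 1 (trajectory form, asymptotic stabilization): In the setting of the previous statement (all LMI hypotheses: P ≻ 0, R ≻ 0, Hᵢ ≻ 0, existence of L with Yᵢ + LC_{di} + C_{di}ᵀLᵀ ≺ 0 for all i, and X_{di} + L_sC_{si} + C_{si}ᵀL_sᵀ ≺ 0 for all i with L_s having top block β·(all-ones) and bottom block −I), let α : [0,∞) → ℝᴺ be a function with αᵢ(t) ≥ 0 and Σᵢ αᵢ(t) = 1 for all t, and let x : [0,∞) → ℝⁿ be differentiable and π : [0,∞) → ℝ^{nπ}, y : [0,∞) → ℝᵖ, u : [0,∞) → ℝᵐ be functions satisfying for all t ≥ 0: x′(t) = A₁x(t) + A₂π(t) + A₃u(t), y(t) = C₁x(t) + C₂π(t), u(t) = −R⁻¹(Σᵢ αᵢ(t)Sᵢ)ᵀy(t), and Σᵢ αᵢ(t)(Υ_{1i}x(t) + Υ_{2i}π(t) + Υ_{3i}u(t)) = 0. Then x(t) → 0 as t → ∞. -/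

import Mathlib

/-!
`V(x) = xᵀ P x` is a quadratic Lyapunov function. At each time, averaging the first LMI with the
weights `αᵢ(t)` eliminates the multiplier `L` (the algebraic constraint says exactly that
`∑ αᵢ C_{di} (x, π, u) = 0`) and bounds `V̇ + xᵀ (∑ αᵢ Hᵢ) x` by the averaged supply rate
`(y, u)ᵀ X_{di} (y, u)`. With `E` the top block of `L_s`, the vector `(y, Eᵀ y)` annihilates
`L_s`, so the second LMI makes the averaged supply rate nonpositive there, and the feedback
`u = -R⁻¹ S_αᵀ y` minimises it over `u` (completing the square). Hence `V̇ ≤ -c ‖x‖² ≤ -γ V`,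
and Grönwall gives exponential decay.
-/

open Matrix

/-- A real matrix is negative definite (quadratic-form sense). -/
def NegDef {k : Type*} [Fintype k] (M : Matrix k k ℝ) : Prop :=
  ∀ z : k → ℝ, z ≠ 0 → z ⬝ᵥ M.mulVec z < 0

open Filter Topology Metric

section Homogeneous

variable {E : Type*} [NormedAddCommGroup E] [NormedSpace ℝ E] {f : E → ℝ}

lemma eq_sq_norm_mul_of_homogeneous (hf : ∀ (a : ℝ) z, f (a • z) = a ^ 2 * f z)
    {z : E} (hz : z ≠ 0) : f z = ‖z‖ ^ 2 * f (‖z‖⁻¹ • z) := by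
  conv_lhs => rw [← one_smul ℝ z, ← mul_inv_cancel₀ (norm_ne_zero_iff.2 hz), ← smul_smul]
  exact hf _ _

variable [ProperSpace E]

lemma exists_le_mul_sq_norm_of_homogeneous (hcont : Continuous f)
    (hf : ∀ (a : ℝ) z, f (a • z) = a ^ 2 * f z) : ∃ C > 0, ∀ z, f z ≤ C * ‖z‖ ^ 2 := by
  obtain ⟨C, hC⟩ := (isCompact_sphere (0 : E) 1).exists_bound_of_continuousOn hcont.continuousOn
  refine ⟨max C 1, by positivity, fun z => ?_⟩
  rcases eq_or_ne z 0 with rfl | hz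
  · simpa using (hf 0 0).le
  have hunit : ‖z‖⁻¹ • z ∈ sphere (0 : E) 1 := mem_sphere_zero_iff_norm.2 (norm_smul_inv_norm hz)
  rw [eq_sq_norm_mul_of_homogeneous hf hz, mul_comm (max C 1)]
  exact mul_le_mul_of_nonneg_left ((le_abs_self _).trans ((hC _ hunit).trans (le_max_left _ _)))
    (sq_nonneg _)

lemma exists_pos_mul_sq_norm_le_of_homogeneous (hcont : Continuous f)
    (hf : ∀ (a : ℝ) z, f (a • z) = a ^ 2 * f z) (hpos : ∀ z, z ≠ 0 → 0 < f z) :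
    ∃ c > 0, ∀ z, c * ‖z‖ ^ 2 ≤ f z := by
  have hne : ∀ z ∈ sphere (0 : E) 1, f z ≠ 0 := fun z hz =>
    (hpos z (ne_zero_of_mem_unit_sphere ⟨z, hz⟩)).ne'
  -- bounding `1 / f` on the sphere, rather than minimising `f`, also covers an empty sphere
  obtain ⟨C, hC⟩ := (isCompact_sphere (0 : E) 1).exists_bound_of_continuousOn
    (hcont.continuousOn.inv₀ hne)
  refine ⟨(max C 1)⁻¹, by positivity, fun z => ?_⟩
  rcases eq_or_ne z 0 with rfl | hz
  · simpa using (hf 0 0).ge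
  have hunit : ‖z‖⁻¹ • z ∈ sphere (0 : E) 1 := mem_sphere_zero_iff_norm.2 (norm_smul_inv_norm hz)
  have hfu := hpos _ (ne_zero_of_mem_unit_sphere ⟨_, hunit⟩)
  have hinv : (f (‖z‖⁻¹ • z))⁻¹ ≤ max C 1 :=
    (le_abs_self _).trans ((Real.norm_eq_abs _ ▸ hC _ hunit).trans (le_max_left _ _))
  rw [eq_sq_norm_mul_of_homogeneous hf hz, mul_comm]
  exact mul_le_mul_of_nonneg_left ((inv_le_comm₀ hfu (by positivity)).1 hinv) (sq_nonneg _)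

end Homogeneous

section QuadraticForm

variable {k : Type*} [Fintype k]

lemma continuous_dotProduct_mulVec_self (M : Matrix k k ℝ) :
    Continuous fun z : k → ℝ => z ⬝ᵥ M *ᵥ z :=
  continuous_id.dotProduct (continuous_const.matrix_mulVec continuous_id)

lemma smul_dotProduct_mulVec_smul (M : Matrix k k ℝ) (a : ℝ) (z : k → ℝ) :
    a • z ⬝ᵥ M *ᵥ (a • z) = a ^ 2 * (z ⬝ᵥ M *ᵥ z) := by
  rw [mulVec_smul, smul_dotProduct, dotProduct_smul, smul_eq_mul, smul_eq_mul]; ring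

lemma exists_dotProduct_mulVec_le_mul_sq_norm (M : Matrix k k ℝ) :
    ∃ C > 0, ∀ z : k → ℝ, z ⬝ᵥ M *ᵥ z ≤ C * ‖z‖ ^ 2 :=
  exists_le_mul_sq_norm_of_homogeneous (continuous_dotProduct_mulVec_self M)
    (smul_dotProduct_mulVec_smul M)

lemma exists_pos_mul_sq_norm_le_dotProduct_mulVec (M : Matrix k k ℝ)
    (hM : ∀ z : k → ℝ, z ≠ 0 → 0 < z ⬝ᵥ M *ᵥ z) :
    ∃ c > 0, ∀ z : k → ℝ, c * ‖z‖ ^ 2 ≤ z ⬝ᵥ M *ᵥ z :=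
  exists_pos_mul_sq_norm_le_of_homogeneous (continuous_dotProduct_mulVec_self M)
    (smul_dotProduct_mulVec_smul M) hM

lemma exists_pos_forall_mul_sq_norm_le_dotProduct_mulVec {ι : Type*} [Finite ι]
    (M : ι → Matrix k k ℝ) (hM : ∀ i, ∀ z : k → ℝ, z ≠ 0 → 0 < z ⬝ᵥ M i *ᵥ z) :
    ∃ c > 0, ∀ i, ∀ z : k → ℝ, c * ‖z‖ ^ 2 ≤ z ⬝ᵥ M i *ᵥ z := by
  choose c hc hcM using fun i => exists_pos_mul_sq_norm_le_dotProduct_mulVec (M i) (hM i)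
  have hsmall : ∀ᶠ c' in 𝓝[>] (0 : ℝ), 0 < c' ∧ ∀ i, c' ≤ c i :=
    eventually_mem_nhdsWithin.and <| eventually_all.2 fun i =>
      nhdsWithin_le_nhds (eventually_le_nhds (hc i))
  obtain ⟨c', hc'pos, hc'le⟩ := hsmall.exists
  exact ⟨c', hc'pos, fun i z =>
    (mul_le_mul_of_nonneg_right (hc'le i) (sq_nonneg _)).trans (hcM i z)⟩

lemma HasDerivAt.dotProduct {f g : ℝ → k → ℝ} {f' g' : k → ℝ} {t : ℝ}
    (hf : HasDerivAt f f' t) (hg : HasDerivAt g g' t) :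
    HasDerivAt (fun s => f s ⬝ᵥ g s) (f' ⬝ᵥ g t + f t ⬝ᵥ g') t := by
  show HasDerivAt (fun s => ∑ i, f s i * g s i) (∑ i, f' i * g t i + ∑ i, f t i * g' i) t
  rw [← Finset.sum_add_distrib]
  exact HasDerivAt.fun_sum fun i _ => ((hasDerivAt_pi.1 hf) i).mul ((hasDerivAt_pi.1 hg) i)

lemma HasDerivAt.matrix_mulVec (M : Matrix k k ℝ) {f : ℝ → k → ℝ} {f' : k → ℝ} {t : ℝ}
    (hf : HasDerivAt f f' t) : HasDerivAt (fun s => M *ᵥ f s) (M *ᵥ f') t :=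
  (M.mulVecLin.toContinuousLinearMap.hasFDerivAt).comp_hasDerivAt t hf

end QuadraticForm

lemma le_mul_exp_of_deriv_le_neg_mul {V V' : ℝ → ℝ} {γ : ℝ}
    (hV : ∀ t, 0 ≤ t → HasDerivAt V (V' t) t) (hle : ∀ t, 0 ≤ t → V' t ≤ -γ * V t)
    {t : ℝ} (ht : 0 ≤ t) : V t ≤ V 0 * Real.exp (-γ * t) := by
  have := le_gronwallBound_of_liminf_deriv_right_le (f := V) (f' := V') (K := -γ) (ε := 0)
    (b := t) (fun s hs => (hV s hs.1).continuousAt.continuousWithinAt)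
    (fun s hs _ hr => (hV s hs.1).hasDerivWithinAt.liminf_right_slope_le hr) le_rfl
    (fun s hs => by simpa using hle s hs.1) t ⟨ht, le_rfl⟩
  simpa [gronwallBound_ε0] using this

lemma tendsto_zero_of_quadratic_lyapunov {E : Type*} [NormedAddCommGroup E] {x : ℝ → E}
    {V V' : ℝ → ℝ} {c₁ c₂ c₃ : ℝ} (hc₁ : 0 < c₁) (hc₂ : 0 < c₂) (hc₃ : 0 < c₃)
    (hV : ∀ t, 0 ≤ t → HasDerivAt V (V' t) t)
    (hlower : ∀ t, c₁ * ‖x t‖ ^ 2 ≤ V t) (hupper : ∀ t, V t ≤ c₂ * ‖x t‖ ^ 2)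
    (hV' : ∀ t, 0 ≤ t → V' t ≤ -(c₃ * ‖x t‖ ^ 2)) :
    Tendsto x atTop (𝓝 0) := by
  set γ := c₃ / c₂
  have hdecay : ∀ t, 0 ≤ t → V' t ≤ -γ * V t := fun t ht => by
    have : γ * V t ≤ c₃ * ‖x t‖ ^ 2 := by
      calc γ * V t ≤ γ * (c₂ * ‖x t‖ ^ 2) := by gcongr; exact hupper t
        _ = c₃ * ‖x t‖ ^ 2 := by rw [← mul_assoc, div_mul_cancel₀ _ hc₂.ne']
    linarith [hV' t ht]
  have hexp : Tendsto (fun t => V 0 / c₁ * Real.exp (-γ * t)) atTop (𝓝 0) := by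
    simpa using ((Real.tendsto_exp_atBot.comp
      (tendsto_id.const_mul_atTop_of_neg (neg_lt_zero.2 (by positivity)))).const_mul (V 0 / c₁))
  have hsq : Tendsto (fun t => ‖x t‖ ^ 2) atTop (𝓝 0) := by
    refine squeeze_zero' (Eventually.of_forall fun t => by positivity) ?_ hexp
    filter_upwards [eventually_ge_atTop 0] with t ht
    rw [div_mul_eq_mul_div, le_div_iff₀ hc₁, mul_comm]
    exact (hlower t).trans (le_mul_exp_of_deriv_le_neg_mul hV hdecay ht)
  rw [tendsto_zero_iff_norm_tendsto_zero]
  simpa using hsq.sqrt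

section Multiplier

variable {k l ι : Type*} [Fintype k] [Fintype l] [Fintype ι]

lemma sum_mul_dotProduct_mulVec (M : ι → Matrix k k ℝ) (a : ι → ℝ) (z : k → ℝ) :
    ∑ i, a i * (z ⬝ᵥ M i *ᵥ z) = z ⬝ᵥ (∑ i, a i • M i) *ᵥ z := by
  simp_rw [sum_mulVec, dotProduct_sum, smul_mulVec, dotProduct_smul, smul_eq_mul]

lemma NegDef.dotProduct_mulVec_nonpos {M : Matrix k k ℝ} (hM : NegDef M) (z : k → ℝ) :
    z ⬝ᵥ M *ᵥ z ≤ 0 := by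
  rcases eq_or_ne z 0 with rfl | hz
  · simp
  · exact (hM z hz).le

lemma dotProduct_add_mul_add_transpose_mul_mulVec (M : Matrix k k ℝ) (L : Matrix k l ℝ)
    (C : Matrix l k ℝ) (z : k → ℝ) :
    z ⬝ᵥ (M + L * C + Cᵀ * Lᵀ) *ᵥ z = z ⬝ᵥ M *ᵥ z + 2 * (z ᵥ* L ⬝ᵥ C *ᵥ z) := by
  rw [add_mulVec, add_mulVec, dotProduct_add, dotProduct_add, ← mulVec_mulVec,
    ← mulVec_mulVec, dotProduct_mulVec z L, dotProduct_mulVec z Cᵀ, vecMul_transpose,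
    mulVec_transpose, dotProduct_comm (C *ᵥ z)]
  ring

lemma NegDef.dotProduct_mulVec_nonpos_of_vecMul_eq_zero {M : Matrix k k ℝ}
    {L : Matrix k l ℝ} {C : Matrix l k ℝ} (h : NegDef (M + L * C + Cᵀ * Lᵀ)) {z : k → ℝ}
    (hz : z ᵥ* L = 0) : z ⬝ᵥ M *ᵥ z ≤ 0 := by
  simpa [dotProduct_add_mul_add_transpose_mul_mulVec, hz] using h.dotProduct_mulVec_nonpos z

/-- Elimination of the multiplier `L`: averaged over `i`, the terms `L Cᵢ + Cᵢᵀ Lᵀ` contribute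
`2 (Lᵀ z) ⬝ (∑ aᵢ Cᵢ z) = 0`. -/
lemma sum_mul_dotProduct_mulVec_nonpos_of_negDef {M : ι → Matrix k k ℝ} {L : Matrix k l ℝ}
    {C : ι → Matrix l k ℝ} {a : ι → ℝ} (ha : ∀ i, 0 ≤ a i)
    (h : ∀ i, NegDef (M i + L * C i + (C i)ᵀ * Lᵀ)) {z : k → ℝ}
    (hz : ∑ i, a i • C i *ᵥ z = 0) : ∑ i, a i * (z ⬝ᵥ M i *ᵥ z) ≤ 0 := by
  have hcross : ∑ i, a i * (z ᵥ* L ⬝ᵥ C i *ᵥ z) = 0 := by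
    simp_rw [← smul_eq_mul, ← dotProduct_smul, ← dotProduct_sum, hz, dotProduct_zero]
  have hsum : ∑ i, a i * (z ⬝ᵥ (M i + L * C i + (C i)ᵀ * Lᵀ) *ᵥ z) ≤ 0 :=
    Finset.sum_nonpos fun i _ => mul_nonpos_of_nonneg_of_nonpos (ha i)
      ((h i).dotProduct_mulVec_nonpos z)
  simp_rw [dotProduct_add_mul_add_transpose_mul_mulVec, mul_add, Finset.sum_add_distrib,
    mul_left_comm _ (2 : ℝ), ← Finset.mul_sum, hcross] at hsum
  simpa using hsum

end Multiplier

lemma sum_smul_fromBlocks {p m ι : Type*} (Q : ι → Matrix p p ℝ) (S : ι → Matrix p m ℝ)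
    (R : Matrix m m ℝ) {s : Finset ι} {a : ι → ℝ} (ha : ∑ i ∈ s, a i = 1) :
    ∑ i ∈ s, a i • fromBlocks (Q i) (S i) (S i)ᵀ R
      = fromBlocks (∑ i ∈ s, a i • Q i) (∑ i ∈ s, a i • S i) (∑ i ∈ s, a i • S i)ᵀ R := by
  ext (r | r) (s | s) <;> simp [Matrix.sum_apply, ← Finset.sum_mul, ha]

section Feedback

variable {p m ι : Type*} [Fintype p] [Fintype m] [Fintype ι]

lemma sumElim_dotProduct_fromBlocks_mulVec (Q : Matrix p p ℝ) (S : Matrix p m ℝ)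
    (R : Matrix m m ℝ) (y : p → ℝ) (v : m → ℝ) :
    Sum.elim y v ⬝ᵥ fromBlocks Q S Sᵀ R *ᵥ Sum.elim y v
      = y ⬝ᵥ Q *ᵥ y + 2 * (y ⬝ᵥ S *ᵥ v) + v ⬝ᵥ R *ᵥ v := by
  simp only [fromBlocks_mulVec, Sum.elim_comp_inl, Sum.elim_comp_inr,
    sumElim_dotProduct_sumElim, dotProduct_add, dotProduct_transpose_mulVec]
  ring

variable [DecidableEq m]

/-- Completing the square: the gap between the two sides is `(w - v)ᵀ R (w - v)`. -/
lemma sumElim_dotProduct_fromBlocks_mulVec_feedback_le (Q : Matrix p p ℝ) (S : Matrix p m ℝ)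
    {R : Matrix m m ℝ} (hR : R.PosDef) (y : p → ℝ) (w : m → ℝ) :
    let v := -((R⁻¹ * Sᵀ) *ᵥ y)
    Sum.elim y v ⬝ᵥ fromBlocks Q S Sᵀ R *ᵥ Sum.elim y v
      ≤ Sum.elim y w ⬝ᵥ fromBlocks Q S Sᵀ R *ᵥ Sum.elim y w := by
  intro v
  have hRv : R *ᵥ v = -(Sᵀ *ᵥ y) := by
    rw [mulVec_neg, mulVec_mulVec, ← Matrix.mul_assoc, mul_nonsing_inv _ hR.det_pos.ne'.isUnit,
      Matrix.one_mul]
  have hsymm : ∀ a b : m → ℝ, a ⬝ᵥ R *ᵥ b = R *ᵥ a ⬝ᵥ b := fun a b => by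
    rw [dotProduct_mulVec, ← mulVec_transpose, (isHermitian_iff_isSymm.1 hR.isHermitian).eq]
  have hgap := hR.posSemidef.dotProduct_mulVec_nonneg (w - v)
  simp only [star_trivial, mulVec_sub, dotProduct_sub, sub_dotProduct] at hgap
  rw [sumElim_dotProduct_fromBlocks_mulVec, sumElim_dotProduct_fromBlocks_mulVec,
    dotProduct_mulVec y S, dotProduct_mulVec y S, ← mulVec_transpose]
  rw [hsymm v w, hsymm v v, hRv] at hgap
  rw [hsymm v v, hRv]
  simp only [neg_dotProduct, dotProduct_comm w] at hgap ⊢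
  linarith

lemma sum_mul_dotProduct_fromBlocks_mulVec_feedback_nonpos {Q : ι → Matrix p p ℝ}
    {S : ι → Matrix p m ℝ} {R : Matrix m m ℝ} (hR : R.PosDef) {E : Matrix p m ℝ}
    {C : ι → Matrix m (p ⊕ m) ℝ}
    (hX : ∀ i, NegDef (fromBlocks (Q i) (S i) (S i)ᵀ R + fromRows E (-1) * C i
      + (C i)ᵀ * (fromRows E (-1))ᵀ))
    {a : ι → ℝ} (ha₀ : ∀ i, 0 ≤ a i) (ha₁ : ∑ i, a i = 1) {y : p → ℝ} {u : m → ℝ}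
    (hu : u = -((R⁻¹ * (∑ i, a i • S i)ᵀ) *ᵥ y)) :
    ∑ i, a i * (Sum.elim y u ⬝ᵥ fromBlocks (Q i) (S i) (S i)ᵀ R *ᵥ Sum.elim y u) ≤ 0 := by
  have hker : Sum.elim y (y ᵥ* E) ᵥ* fromRows E (-1) = 0 := by
    rw [sumElim_vecMul_fromRows, vecMul_neg, vecMul_one, add_neg_cancel]
  calc ∑ i, a i * (Sum.elim y u ⬝ᵥ fromBlocks (Q i) (S i) (S i)ᵀ R *ᵥ Sum.elim y u)
      ≤ ∑ i, a i * (Sum.elim y (y ᵥ* E) ⬝ᵥ fromBlocks (Q i) (S i) (S i)ᵀ R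
          *ᵥ Sum.elim y (y ᵥ* E)) := by
        simp only [sum_mul_dotProduct_mulVec, sum_smul_fromBlocks Q S R ha₁, hu]
        exact sumElim_dotProduct_fromBlocks_mulVec_feedback_le _ _ hR y _
    _ ≤ 0 := Finset.sum_nonpos fun i _ =>
        mul_nonpos_of_nonneg_of_nonpos (ha₀ i)
          ((hX i).dotProduct_mulVec_nonpos_of_vecMul_eq_zero hker)

end Feedback

section ClosedLoop

variable {n q m p : Type*} [Fintype n] [Fintype q] [Fintype m] [Fintype p]

/-- The matrix `Yᵢ`, with `(Q, S, H)` standing for `(Qᵢ, Sᵢ, Hᵢ)`. -/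
def dissipationMatrix (P : Matrix n n ℝ) (A₁ : Matrix n n ℝ) (A₂ : Matrix n q ℝ)
    (A₃ : Matrix n m ℝ) (C₁ : Matrix p n ℝ) (C₂ : Matrix p q ℝ) (Q : Matrix p p ℝ)
    (S : Matrix p m ℝ) (R : Matrix m m ℝ) (H : Matrix n n ℝ) :
    Matrix (n ⊕ (q ⊕ m)) (n ⊕ (q ⊕ m)) ℝ :=
  fromBlocks
    (P * A₁ + A₁ᵀ * P - C₁ᵀ * Q * C₁ + H)
    (fromCols (P * A₂ - C₁ᵀ * Q * C₂) (P * A₃ - C₁ᵀ * S))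
    (fromRows (P * A₂ - C₁ᵀ * Q * C₂)ᵀ (P * A₃ - C₁ᵀ * S)ᵀ)
    (fromBlocks (-(C₂ᵀ * Q * C₂)) (-(C₂ᵀ * S)) (-(C₂ᵀ * S))ᵀ (-R))

lemma sumElim_dotProduct_dissipationMatrix_mulVec {P : Matrix n n ℝ} (hP : P.IsSymm)
    (A₁ : Matrix n n ℝ) (A₂ : Matrix n q ℝ) (A₃ : Matrix n m ℝ) (C₁ : Matrix p n ℝ)
    (C₂ : Matrix p q ℝ) {Q : Matrix p p ℝ} (hQ : Q.IsSymm) (S : Matrix p m ℝ)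
    (R : Matrix m m ℝ) (H : Matrix n n ℝ) (x : n → ℝ) (π : q → ℝ) (u : m → ℝ) :
    Sum.elim x (Sum.elim π u) ⬝ᵥ dissipationMatrix P A₁ A₂ A₃ C₁ C₂ Q S R H
        *ᵥ Sum.elim x (Sum.elim π u)
      = (A₁ *ᵥ x + A₂ *ᵥ π + A₃ *ᵥ u) ⬝ᵥ P *ᵥ x + x ⬝ᵥ P *ᵥ (A₁ *ᵥ x + A₂ *ᵥ π + A₃ *ᵥ u)
        + x ⬝ᵥ H *ᵥ x - Sum.elim (C₁ *ᵥ x + C₂ *ᵥ π) u ⬝ᵥ fromBlocks Q S Sᵀ R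
          *ᵥ Sum.elim (C₁ *ᵥ x + C₂ *ᵥ π) u := by
  rw [sumElim_dotProduct_fromBlocks_mulVec]
  simp only [dissipationMatrix, fromBlocks_mulVec, Sum.elim_comp_inl, Sum.elim_comp_inr,
    fromCols_mulVec_sumElim, fromRows_mulVec, transpose_sub, transpose_mul,
    transpose_transpose, transpose_neg, hP.eq, hQ.eq, add_mulVec, sub_mulVec, neg_mulVec,
    mulVec_add, ← mulVec_mulVec, sumElim_dotProduct_sumElim, dotProduct_add, add_dotProduct,
    dotProduct_neg, dotProduct_sub, dotProduct_transpose_mulVec]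
  simp only [dotProduct_comm]
  ring

lemma lyapunov_derivative_le_of_lmi {ι l : Type*} [Fintype ι] [Fintype l] [DecidableEq m]
    {P : Matrix n n ℝ} (hP : P.IsSymm) {A₁ : Matrix n n ℝ} {A₂ : Matrix n q ℝ}
    {A₃ : Matrix n m ℝ} {C₁ : Matrix p n ℝ} {C₂ : Matrix p q ℝ} {Q : ι → Matrix p p ℝ}
    (hQ : ∀ i, (Q i).IsSymm) {S : ι → Matrix p m ℝ} {R : Matrix m m ℝ} (hR : R.PosDef)
    {H : ι → Matrix n n ℝ} {c : ℝ} (hH : ∀ i z, c * ‖z‖ ^ 2 ≤ z ⬝ᵥ H i *ᵥ z)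
    {Cd : ι → Matrix l (n ⊕ (q ⊕ m)) ℝ} {L : Matrix (n ⊕ (q ⊕ m)) l ℝ}
    (hY : ∀ i, NegDef (dissipationMatrix P A₁ A₂ A₃ C₁ C₂ (Q i) (S i) R (H i)
      + L * Cd i + (Cd i)ᵀ * Lᵀ))
    {E : Matrix p m ℝ} {Cs : ι → Matrix m (p ⊕ m) ℝ}
    (hX : ∀ i, NegDef (fromBlocks (Q i) (S i) (S i)ᵀ R + fromRows E (-1) * Cs i
      + (Cs i)ᵀ * (fromRows E (-1))ᵀ))
    {a : ι → ℝ} (ha₀ : ∀ i, 0 ≤ a i) (ha₁ : ∑ i, a i = 1)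
    {x : n → ℝ} {π : q → ℝ} {u : m → ℝ} {y : p → ℝ} (hy : y = C₁ *ᵥ x + C₂ *ᵥ π)
    (hu : u = -((R⁻¹ * (∑ i, a i • S i)ᵀ) *ᵥ y))
    (hz : ∑ i, a i • Cd i *ᵥ Sum.elim x (Sum.elim π u) = 0) :
    (A₁ *ᵥ x + A₂ *ᵥ π + A₃ *ᵥ u) ⬝ᵥ P *ᵥ x + x ⬝ᵥ P *ᵥ (A₁ *ᵥ x + A₂ *ᵥ π + A₃ *ᵥ u)
      ≤ -(c * ‖x‖ ^ 2) := by
  subst hy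
  have hdissipation := sum_mul_dotProduct_mulVec_nonpos_of_negDef ha₀ hY hz
  have hsupply := sum_mul_dotProduct_fromBlocks_mulVec_feedback_nonpos hR hX ha₀ ha₁ hu
  have hmargin : c * ‖x‖ ^ 2 ≤ ∑ i, a i * (x ⬝ᵥ H i *ᵥ x) :=
    calc c * ‖x‖ ^ 2 = ∑ i, a i * (c * ‖x‖ ^ 2) := by rw [← Finset.sum_mul, ha₁, one_mul]
      _ ≤ _ := Finset.sum_le_sum fun i _ => mul_le_mul_of_nonneg_left (hH i x) (ha₀ i)
  simp only [sumElim_dotProduct_dissipationMatrix_mulVec hP _ _ _ _ _ (hQ _), mul_sub, mul_add,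
    Finset.sum_sub_distrib, Finset.sum_add_distrib, ← Finset.sum_mul, ha₁, one_mul]
    at hdissipation
  linarith

end ClosedLoop

theorem gs_sof_asymptotic_stabilization_general (n nπ m p N : ℕ) (β : ℝ)
    (P : Matrix (Fin n) (Fin n) ℝ) (hPsymm : P.IsSymm)
    (hPpd : ∀ z : Fin n → ℝ, z ≠ 0 → 0 < z ⬝ᵥ P.mulVec z)
    (R : Matrix (Fin m) (Fin m) ℝ) (hRsymm : R.IsSymm)
    (hRpd : ∀ z : Fin m → ℝ, z ≠ 0 → 0 < z ⬝ᵥ R.mulVec z)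
    (H : Fin N → Matrix (Fin n) (Fin n) ℝ)
    (hHpd : ∀ i, ∀ z : Fin n → ℝ, z ≠ 0 → 0 < z ⬝ᵥ (H i).mulVec z)
    (Q : Fin N → Matrix (Fin p) (Fin p) ℝ) (hQsymm : ∀ i, (Q i).IsSymm)
    (S : Fin N → Matrix (Fin p) (Fin m) ℝ)
    (A₁ : Matrix (Fin n) (Fin n) ℝ) (A₂ : Matrix (Fin n) (Fin nπ) ℝ)
    (A₃ : Matrix (Fin n) (Fin m) ℝ)
    (C₁ : Matrix (Fin p) (Fin n) ℝ) (C₂ : Matrix (Fin p) (Fin nπ) ℝ)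
    (Υ₁ : Fin N → Matrix (Fin nπ) (Fin n) ℝ)
    (Υ₂ : Fin N → Matrix (Fin nπ) (Fin nπ) ℝ)
    (Υ₃ : Fin N → Matrix (Fin nπ) (Fin m) ℝ)
    (Cd : Fin N → Matrix (Fin nπ) (Fin n ⊕ (Fin nπ ⊕ Fin m)) ℝ)
    (hCd : ∀ i, Cd i = fromCols (Υ₁ i) (fromCols (Υ₂ i) (Υ₃ i)))
    (Y : Fin N → Matrix (Fin n ⊕ (Fin nπ ⊕ Fin m)) (Fin n ⊕ (Fin nπ ⊕ Fin m)) ℝ)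
    (hY : ∀ i, Y i = fromBlocks
      (P * A₁ + A₁ᵀ * P - C₁ᵀ * Q i * C₁ + H i)
      (fromCols (P * A₂ - C₁ᵀ * Q i * C₂) (P * A₃ - C₁ᵀ * S i))
      (fromRows (P * A₂ - C₁ᵀ * Q i * C₂)ᵀ (P * A₃ - C₁ᵀ * S i)ᵀ)
      (fromBlocks (-(C₂ᵀ * Q i * C₂)) (-(C₂ᵀ * S i)) (-(C₂ᵀ * S i))ᵀ (-R)))
    (Ls : Matrix (Fin p ⊕ Fin m) (Fin m) ℝ)
    (hLs : Ls = fromRows (Matrix.of fun _ _ => β) (-(1 : Matrix (Fin m) (Fin m) ℝ)))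
    (hXd : ∀ i, NegDef (fromBlocks (Q i) (S i) (S i)ᵀ R
      + Ls * fromCols (S i)ᵀ R + (fromCols (S i)ᵀ R)ᵀ * Lsᵀ))
    (hLMI : ∃ L : Matrix (Fin n ⊕ (Fin nπ ⊕ Fin m)) (Fin nπ) ℝ,
      ∀ i, NegDef (Y i + L * Cd i + (Cd i)ᵀ * Lᵀ))
    -- trajectories
    (α : ℝ → Fin N → ℝ)
    (hα : ∀ t, 0 ≤ t → (∀ i, 0 ≤ α t i) ∧ (∑ i, α t i) = 1)
    (x : ℝ → Fin n → ℝ) (piv : ℝ → Fin nπ → ℝ)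
    (y : ℝ → Fin p → ℝ) (u : ℝ → Fin m → ℝ)
    (hode : ∀ t, 0 ≤ t → HasDerivAt x
      (A₁.mulVec (x t) + A₂.mulVec (piv t) + A₃.mulVec (u t)) t)
    (hy : ∀ t, 0 ≤ t → y t = C₁.mulVec (x t) + C₂.mulVec (piv t))
    (hu : ∀ t, 0 ≤ t → u t = -((R⁻¹ * (∑ i, α t i • S i)ᵀ).mulVec (y t)))
    (halg : ∀ t, 0 ≤ t →
      (∑ i, α t i • ((Υ₁ i).mulVec (x t) + (Υ₂ i).mulVec (piv t)
        + (Υ₃ i).mulVec (u t))) = 0) :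
    Filter.Tendsto x Filter.atTop (nhds 0) := by
  obtain ⟨L, hL⟩ := hLMI
  subst hLs
  have hR : R.PosDef := PosDef.of_dotProduct_mulVec_pos
    (isHermitian_iff_isSymm.2 hRsymm) (by simpa using hRpd)
  obtain ⟨cP, hcP, hPlower⟩ := exists_pos_mul_sq_norm_le_dotProduct_mulVec P hPpd
  obtain ⟨CP, hCP, hPupper⟩ := exists_dotProduct_mulVec_le_mul_sq_norm P
  obtain ⟨c, hc, hH⟩ := exists_pos_forall_mul_sq_norm_le_dotProduct_mulVec H hHpd
  refine tendsto_zero_of_quadratic_lyapunov hcP hCP hc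
    (fun t ht => (hode t ht).dotProduct ((hode t ht).matrix_mulVec P))
    (fun t => hPlower (x t)) (fun t => hPupper (x t)) fun t ht => ?_
  obtain ⟨hα₀, hα₁⟩ := hα t ht
  refine lyapunov_derivative_le_of_lmi hPsymm hQsymm hR hH (fun i => hY i ▸ hL i) hXd hα₀ hα₁
    (hy t ht) (hu t ht) ?_
  simpa [hCd, fromCols_mulVec_sumElim, add_assoc] using halg t ht

/-- Theorem 1 (trajectory form, asymptotic stabilization). -/
theorem gs_sof_asymptotic_stabilization (n nπ m p N : ℕ) (β : ℝ)
    (P : Matrix (Fin n) (Fin n) ℝ) (hPsymm : P.IsSymm)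
    (hPpd : ∀ z : Fin n → ℝ, z ≠ 0 → 0 < z ⬝ᵥ P.mulVec z)
    (R : Matrix (Fin m) (Fin m) ℝ) (hRsymm : R.IsSymm)
    (hRpd : ∀ z : Fin m → ℝ, z ≠ 0 → 0 < z ⬝ᵥ R.mulVec z)
    (H : Fin N → Matrix (Fin n) (Fin n) ℝ) (hHsymm : ∀ i, (H i).IsSymm)
    (hHpd : ∀ i, ∀ z : Fin n → ℝ, z ≠ 0 → 0 < z ⬝ᵥ (H i).mulVec z)
    (Q : Fin N → Matrix (Fin p) (Fin p) ℝ) (hQsymm : ∀ i, (Q i).IsSymm)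
    (S : Fin N → Matrix (Fin p) (Fin m) ℝ)
    (A₁ : Matrix (Fin n) (Fin n) ℝ) (A₂ : Matrix (Fin n) (Fin nπ) ℝ)
    (A₃ : Matrix (Fin n) (Fin m) ℝ)
    (C₁ : Matrix (Fin p) (Fin n) ℝ) (C₂ : Matrix (Fin p) (Fin nπ) ℝ)
    (Υ₁ : Fin N → Matrix (Fin nπ) (Fin n) ℝ)
    (Υ₂ : Fin N → Matrix (Fin nπ) (Fin nπ) ℝ)
    (Υ₃ : Fin N → Matrix (Fin nπ) (Fin m) ℝ)
    (Cd : Fin N → Matrix (Fin nπ) (Fin n ⊕ (Fin nπ ⊕ Fin m)) ℝ)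
    (hCd : ∀ i, Cd i = fromCols (Υ₁ i) (fromCols (Υ₂ i) (Υ₃ i)))
    (Y : Fin N → Matrix (Fin n ⊕ (Fin nπ ⊕ Fin m)) (Fin n ⊕ (Fin nπ ⊕ Fin m)) ℝ)
    (hY : ∀ i, Y i = fromBlocks
      (P * A₁ + A₁ᵀ * P - C₁ᵀ * Q i * C₁ + H i)
      (fromCols (P * A₂ - C₁ᵀ * Q i * C₂) (P * A₃ - C₁ᵀ * S i))
      (fromRows (P * A₂ - C₁ᵀ * Q i * C₂)ᵀ (P * A₃ - C₁ᵀ * S i)ᵀ)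
      (fromBlocks (-(C₂ᵀ * Q i * C₂)) (-(C₂ᵀ * S i)) (-(C₂ᵀ * S i))ᵀ (-R)))
    (Ls : Matrix (Fin p ⊕ Fin m) (Fin m) ℝ)
    (hLs : Ls = fromRows (Matrix.of fun _ _ => β) (-(1 : Matrix (Fin m) (Fin m) ℝ)))
    (hXd : ∀ i, NegDef (fromBlocks (Q i) (S i) (S i)ᵀ R
      + Ls * fromCols (S i)ᵀ R + (fromCols (S i)ᵀ R)ᵀ * Lsᵀ))
    (hLMI : ∃ L : Matrix (Fin n ⊕ (Fin nπ ⊕ Fin m)) (Fin nπ) ℝ,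
      ∀ i, NegDef (Y i + L * Cd i + (Cd i)ᵀ * Lᵀ))
    -- trajectories
    (α : ℝ → Fin N → ℝ)
    (hα : ∀ t, 0 ≤ t → (∀ i, 0 ≤ α t i) ∧ (∑ i, α t i) = 1)
    (x : ℝ → Fin n → ℝ) (piv : ℝ → Fin nπ → ℝ)
    (y : ℝ → Fin p → ℝ) (u : ℝ → Fin m → ℝ)
    (hode : ∀ t, 0 ≤ t → HasDerivAt x
      (A₁.mulVec (x t) + A₂.mulVec (piv t) + A₃.mulVec (u t)) t)
    (hy : ∀ t, 0 ≤ t → y t = C₁.mulVec (x t) + C₂.mulVec (piv t))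
    (hu : ∀ t, 0 ≤ t → u t = -((R⁻¹ * (∑ i, α t i • S i)ᵀ).mulVec (y t)))
    (halg : ∀ t, 0 ≤ t →
      (∑ i, α t i • ((Υ₁ i).mulVec (x t) + (Υ₂ i).mulVec (piv t)
        + (Υ₃ i).mulVec (u t))) = 0) :
    Filter.Tendsto x Filter.atTop (nhds 0) :=
  gs_sof_asymptotic_stabilization_general n nπ m p N β P hPsymm hPpd R hRsymm hRpd H hHpd Q hQsymm S
    A₁ A₂ A₃ C₁ C₂ Υ₁ Υ₂ Υ₃ Cd hCd Y hY Ls hLs hXd hLMI α hα x piv y u hode hy hu halg
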